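/- arXiv:1907.12276 — 6 statements merged into one kernel-verified Lean document; each statement's English description precedes it below -/
import Mathlib

section
/- For every finite simple graph G, the game chromatic number of G is at most the game coloring number of G, i.e., χ_g(G) ≤ col_g(G). -/
/-! Given a marking strategy for the bound `k`, Alice plays the coloring game with `k` colors
by coloring, with any free color, the vertex her marking strategy would mark, and reads each of
Bob's colorings as a marking. The colored vertices are then always exactly the marked ones, so
an uncolored vertex has fewer than `k` colored neighbors and, by pigeonhole, a free color among
`k`: the game never gets stuck. -/

open scoped Classical

namespace ConnGame

variable {V : Type*}

/-- A move `(v, a)` is proper at the partial coloring `c`: `v` is uncolored and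
no neighbor of `v` already has color `a`. -/
def ProperMove (G : SimpleGraph V) {k : ℕ} (c : V → Option (Fin k)) (v : V) (a : Fin k) : Prop :=
  c v = none ∧ ∀ u, G.Adj v u → c u ≠ some a

/-- Connectivity condition on a move: either no vertex is colored yet (first move),
or the chosen vertex has at least one colored neighbor.  This guarantees that the set
of colored vertices induces a connected subgraph after each move. -/
def ConnMove (G : SimpleGraph V) {k : ℕ} (c : V → Option (Fin k)) (v : V) : Prop :=
  (∀ u, c u = none) ∨ ∃ u, G.Adj v u ∧ (c u).isSome

/-- A legal move in the coloring game (connected version when `conn = true`). -/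
def LegalMove (conn : Bool) (G : SimpleGraph V) {k : ℕ}
    (c : V → Option (Fin k)) (v : V) (a : Fin k) : Prop :=
  ProperMove G c v a ∧ (conn = true → ConnMove G c v)

/-- The position obtained by coloring vertex `v` with color `a`. -/
def play [DecidableEq V] {k : ℕ} (c : V → Option (Fin k)) (v : V) (a : Fin k) :
    V → Option (Fin k) :=
  Function.update c v (some a)

/-- Alice has a winning strategy in the (connected, if `conn`) coloring game with `k`
colors, starting from position `c`, with `n` moves remaining, where `aliceTurn` records
whose turn it is.  Alice wins exactly if all vertices eventually get colored. -/
def AliceWinsFrom [DecidableEq V] (conn : Bool) (G : SimpleGraph V) (k : ℕ) :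
    ℕ → Bool → (V → Option (Fin k)) → Prop
  | 0, _, c => ∀ v, (c v).isSome
  | n + 1, aliceTurn, c =>
    (∀ v, (c v).isSome) ∨
      (if aliceTurn then
        ∃ v a, LegalMove conn G c v a ∧ AliceWinsFrom conn G k n false (play c v a)
      else
        (∃ v a, LegalMove conn G c v a) ∧
          ∀ v a, LegalMove conn G c v a → AliceWinsFrom conn G k n true (play c v a))

/-- Bob has a winning strategy in the (connected, if `conn`) coloring game with `k`
colors, from position `c` with `n` moves remaining.  Bob wins exactly if the game ends
(no legal move is available) while some vertex is still uncolored. -/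
def BobWinsFrom [DecidableEq V] (conn : Bool) (G : SimpleGraph V) (k : ℕ) :
    ℕ → Bool → (V → Option (Fin k)) → Prop
  | 0, _, c => ∃ v, c v = none
  | n + 1, aliceTurn, c =>
    (∃ v, c v = none) ∧
      (if aliceTurn then
        ∀ v a, LegalMove conn G c v a → BobWinsFrom conn G k n false (play c v a)
      else
        (¬ ∃ v a, LegalMove conn G c v a) ∨
          ∃ v a, LegalMove conn G c v a ∧ BobWinsFrom conn G k n true (play c v a))

/-- Alice has a winning strategy in the (connected, if `conn`) coloring game on `G`
with `k` colors (Alice moves first, starting from the all-uncolored position). -/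
def AliceWinsColoringGame [Fintype V] [DecidableEq V] (conn : Bool) (G : SimpleGraph V)
    (k : ℕ) : Prop :=
  AliceWinsFrom conn G k (Fintype.card V) true fun _ => none

/-- Bob has a winning strategy in the (connected, if `conn`) coloring game on `G`
with `k` colors. -/
def BobWinsColoringGame [Fintype V] [DecidableEq V] (conn : Bool) (G : SimpleGraph V)
    (k : ℕ) : Prop :=
  BobWinsFrom conn G k (Fintype.card V) true fun _ => none

/-- The game chromatic number: the least `k` such that Alice wins the coloring game
on `G` with `k` colors. -/
noncomputable def gameChromaticNumber [Fintype V] [DecidableEq V] (G : SimpleGraph V) : ℕ :=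
  sInf {k | AliceWinsColoringGame false G k}

/-- The connected game chromatic number: the least `k` such that Alice wins the
connected coloring game on `G` with `k` colors. -/
noncomputable def connGameChromaticNumber [Fintype V] [DecidableEq V] (G : SimpleGraph V) : ℕ :=
  sInf {k | AliceWinsColoringGame true G k}

/-- A legal move in the marking game (connected version when `conn = true`):
mark an unmarked vertex, which (in the connected game) must have a marked neighbor
unless no vertex is marked yet. -/
def MarkLegal (conn : Bool) (G : SimpleGraph V) (M : Finset V) (v : V) : Prop :=
  v ∉ M ∧ (conn = true → (M = ∅ ∨ ∃ u ∈ M, G.Adj u v))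

/-- The marking-game objective for parameter `k`: every unmarked vertex has at most
`k - 1` marked neighbors. -/
def MarkGood (G : SimpleGraph V) (k : ℕ) (M : Finset V) : Prop :=
  ∀ v ∉ M, (M.filter fun u => G.Adj u v).card < k

/-- Alice has a strategy in the (connected, if `conn`) marking game, from position `M`
with `n` moves remaining, guaranteeing that at every moment every unmarked vertex has
at most `k - 1` marked neighbors. -/
def AliceWinsMarkingFrom [DecidableEq V] (conn : Bool) (G : SimpleGraph V) (k : ℕ) :
    ℕ → Bool → Finset V → Prop
  | 0, _, M => MarkGood G k M
  | n + 1, aliceTurn, M =>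
    MarkGood G k M ∧
      (if aliceTurn then
        ∃ v, MarkLegal conn G M v ∧ AliceWinsMarkingFrom conn G k n false (insert v M)
      else
        ∀ v, MarkLegal conn G M v → AliceWinsMarkingFrom conn G k n true (insert v M))

/-- Alice achieves the marking-game bound `k` on `G` (connected version if `conn`). -/
def AliceWinsMarkingGame [Fintype V] [DecidableEq V] (conn : Bool) (G : SimpleGraph V)
    (k : ℕ) : Prop :=
  AliceWinsMarkingFrom conn G k (Fintype.card V) true ∅

/-- The game coloring number: the least `k` for which Alice has a strategy in the
marking game guaranteeing that every unmarked vertex always has at most `k - 1`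
marked neighbors. -/
noncomputable def gameColoringNumber [Fintype V] [DecidableEq V] (G : SimpleGraph V) : ℕ :=
  sInf {k | AliceWinsMarkingGame false G k}

/-- The connected game coloring number. -/
noncomputable def connGameColoringNumber [Fintype V] [DecidableEq V] (G : SimpleGraph V) : ℕ :=
  sInf {k | AliceWinsMarkingGame true G k}

/-- `H` is a minor of `G`: there is a family of nonempty, pairwise disjoint,
connected branch sets in `G` indexed by the vertices of `H`, with an edge of `G`
between the branch sets of any two adjacent vertices of `H`. -/
def IsMinorOf {W : Type*} (H : SimpleGraph W) (G : SimpleGraph V) : Prop :=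
  ∃ f : W → Set V,
    (∀ w, (f w).Nonempty) ∧
    (∀ w, ((G.induce (f w)).Connected)) ∧
    (∀ w w', w ≠ w' → Disjoint (f w) (f w')) ∧
    (∀ w w', H.Adj w w' → ∃ u ∈ f w, ∃ v ∈ f w', G.Adj u v)

/-- A graph is outerplanar iff it contains neither `K₄` nor `K_{2,3}` as a minor. -/
def Outerplanar (G : SimpleGraph V) : Prop :=
  ¬ IsMinorOf (SimpleGraph.completeGraph (Fin 4)) G ∧
  ¬ IsMinorOf (completeBipartiteGraph (Fin 2) (Fin 3)) G

section Transfer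

variable {G : SimpleGraph V} {k : ℕ} {c : V → Option (Fin k)} {M : Finset V}

@[simp]
lemma legalMove_false_iff {v : V} {a : Fin k} : LegalMove false G c v a ↔ ProperMove G c v a := by
  simp [LegalMove]

@[simp]
lemma markLegal_false_iff {v : V} : MarkLegal false G M v ↔ v ∉ M := by
  simp [MarkLegal]

lemma exists_free_color (hM : ∀ u, (c u).isSome ↔ u ∈ M) {v : V}
    (hv : (M.filter fun u => G.Adj u v).card < k) :
    ∃ a : Fin k, ∀ u, G.Adj v u → c u ≠ some a := by
  by_contra! h
  choose f hf_adj hf_color using h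
  have hf_maps : Set.MapsTo f (Finset.univ : Finset (Fin k)) (M.filter fun u => G.Adj u v) :=
    fun a _ => Finset.mem_filter.2 ⟨(hM (f a)).1 (by simp [hf_color a]), (hf_adj a).symm⟩
  obtain ⟨a, -, b, -, hab, hfab⟩ :=
    Finset.exists_ne_map_eq_of_card_lt_of_maps_to (by simpa using hv) hf_maps
  exact hab (Option.some_injective _ (by rw [← hf_color a, hfab, hf_color b]))

lemma exists_properMove_of_markGood (hM : ∀ u, (c u).isSome ↔ u ∈ M) (hgood : MarkGood G k M)
    {v : V} (hv : v ∉ M) : ∃ a, ProperMove G c v a := by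
  obtain ⟨a, ha⟩ := exists_free_color hM (hgood v hv)
  exact ⟨a, Option.not_isSome_iff_eq_none.1 (mt (hM v).1 hv), ha⟩

lemma markGood_of_card_lt [Fintype V] (hk : Fintype.card V < k) (M : Finset V) :
    MarkGood G k M := fun v _ =>
  calc (M.filter fun u => G.Adj u v).card ≤ M.card := Finset.card_filter_le _ _
    _ ≤ Fintype.card V := M.card_le_univ
    _ < k := hk

variable [DecidableEq V]

lemma isSome_play_iff (hM : ∀ u, (c u).isSome ↔ u ∈ M) (v : V) (a : Fin k) (u : V) :
    (play c v a u).isSome ↔ u ∈ insert v M := by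
  by_cases hu : u = v
  · simp [play, hu]
  · simp [play, hu, hM u]

theorem AliceWinsMarkingFrom.aliceWinsFrom [Fintype V] {n : ℕ} :
    ∀ {turn : Bool} {M : Finset V} {c : V → Option (Fin k)},
      (∀ u, (c u).isSome ↔ u ∈ M) → M.card + n = Fintype.card V →
      AliceWinsMarkingFrom false G k n turn M → AliceWinsFrom false G k n turn c := by
  induction n with
  | zero =>
    intro turn M c hM hcard _ v
    exact (hM v).2 (Finset.eq_univ_of_card M (by simpa using hcard) ▸ Finset.mem_univ v)
  | succ n ih =>
    rintro turn M c hM hcard ⟨hgood, hnext⟩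
    have step : ∀ {turn'} v a, v ∉ M → AliceWinsMarkingFrom false G k n turn' (insert v M) →
        AliceWinsFrom false G k n turn' (play c v a) := fun v a hv =>
      ih (isSome_play_iff hM v a) (by rw [Finset.card_insert_of_notMem hv]; omega)
    rw [AliceWinsFrom]
    by_cases hall : ∀ v, (c v).isSome
    · exact Or.inl hall
    right
    cases turn with
    | true =>
      obtain ⟨v, hv, hwin⟩ := by simpa using hnext
      obtain ⟨a, ha⟩ := exists_properMove_of_markGood hM hgood hv
      exact ⟨v, a, legalMove_false_iff.2 ha, step v a hv hwin⟩
    | false =>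
      simp only [Bool.false_eq_true, if_false, markLegal_false_iff] at hnext
      obtain ⟨v, hv⟩ := not_forall.1 hall
      obtain ⟨a, ha⟩ := exists_properMove_of_markGood hM hgood (mt (hM v).2 hv)
      refine ⟨⟨v, a, legalMove_false_iff.2 ha⟩, fun v a hmove => ?_⟩
      have hv : v ∉ M := fun hvM => by simpa [(legalMove_false_iff.1 hmove).1] using (hM v).2 hvM
      exact step v a hv (hnext v hv)

lemma aliceWinsMarkingFrom_of_card_lt [Fintype V] (hk : Fintype.card V < k) {n : ℕ} :
    ∀ {turn : Bool} {M : Finset V}, M.card + n = Fintype.card V →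
      AliceWinsMarkingFrom false G k n turn M := by
  have hgood := markGood_of_card_lt (G := G) hk
  induction n with
  | zero => exact fun _ => hgood _
  | succ n ih =>
    rintro (_ | _) M hcard
    · refine ⟨hgood M, fun v hv => ih ?_⟩
      rw [Finset.card_insert_of_notMem (markLegal_false_iff.1 hv)]; omega
    · obtain ⟨v, hv⟩ : ∃ v, v ∉ M := by
        by_contra! h
        rw [Finset.eq_univ_of_forall h, Finset.card_univ] at hcard
        omega
      refine ⟨hgood M, v, markLegal_false_iff.2 hv, ih ?_⟩
      rw [Finset.card_insert_of_notMem hv]; omega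

end Transfer

end ConnGame

/-- For every finite simple graph `G`, `χ_g(G) ≤ col_g(G)`. -/
theorem gameChromaticNumber_le_gameColoringNumber {V : Type*} [Fintype V] [DecidableEq V]
    (G : SimpleGraph V) :
    ConnGame.gameChromaticNumber G ≤ ConnGame.gameColoringNumber G := by
  have hwins : {k | ConnGame.AliceWinsMarkingGame false G k}.Nonempty :=
    ⟨_, ConnGame.aliceWinsMarkingFrom_of_card_lt (Nat.lt_succ_self _) (by simp)⟩
  exact Nat.sInf_le <| ConnGame.AliceWinsMarkingFrom.aliceWinsFrom (by simp) (by simp)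
    (Nat.sInf_mem hwins)
end

section
/- For every finite connected bipartite simple graph G with at least one vertex, Alice has a winning strategy in the connected graph coloring game on G with 2 colors; consequently χ_cg(G) ≤ 2. -/
/-!
Every position reached in the connected game with two colors is the restriction of a proper
2-coloring of `G`: the first move is matched by swapping the colors of a given 2-coloring, and
every later move colors a vertex next to an already colored one, whose color leaves only one
choice. So an uncolored vertex next to a colored one can always be colored legally, and such a
vertex exists until the game is over because `G` is connected. Hence nobody ever gets stuck
before every vertex is colored.
-/

open scoped Classical

namespace SimpleGraph

variable {V α : Type*} {G : SimpleGraph V}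

theorem Coloring.exists_apply_eq [DecidableEq α] (C : G.Coloring α) (v : V) (a : α) :
    ∃ C' : G.Coloring α, C' v = a :=
  ⟨Coloring.mk (fun w => Equiv.swap (C v) a (C w))
    fun h => (Equiv.injective _).ne (C.valid h), Equiv.swap_apply_left _ _⟩

theorem Preconnected.exists_adj_boundary (hG : G.Preconnected) {p : V → Prop} {u v : V}
    (hu : p u) (hv : ¬ p v) : ∃ x y, G.Adj x y ∧ p x ∧ ¬ p y := by
  obtain ⟨d, -, hx, hy⟩ := (hG u v).some.exists_boundary_dart {w | p w} hu hv
  exact ⟨d.fst, d.snd, d.adj, hx, hy⟩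

end SimpleGraph

namespace ConnGame

open Finset

variable {V α : Type*} {G : SimpleGraph V} {k : ℕ}

def ExtendsToColoring (G : SimpleGraph V) (c : V → Option α) : Prop :=
  ∃ C : G.Coloring α, ∀ v a, c v = some a → C v = a

theorem extendsToColoring_none (h : G.Colorable k) :
    ExtendsToColoring G (fun _ => none : V → Option (Fin k)) :=
  let ⟨C⟩ := h
  ⟨C, fun _ _ h => nomatch h⟩

theorem exists_legalMove (hG : G.Preconnected) {c : V → Option (Fin k)}
    (hc : ExtendsToColoring G c) {v : V} (hv : c v = none) : ∃ w a, LegalMove true G c w a := by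
  obtain ⟨C, hC⟩ := hc
  have proper : ∀ y, c y = none → ProperMove G c y (C y) := fun y hy =>
    ⟨hy, fun u hyu hu => C.valid hyu (hC u _ hu).symm⟩
  by_cases hempty : ∀ u, c u = none
  · exact ⟨v, C v, proper v hv, fun _ => Or.inl hempty⟩
  · push Not at hempty
    obtain ⟨u, hu⟩ := hempty
    obtain ⟨x, y, hxy, hx, hy⟩ := hG.exists_adj_boundary (p := fun w => (c w).isSome)
      (Option.ne_none_iff_isSome.mp hu) (by simpa using hv)
    exact ⟨y, C y, proper y (by simpa using hy), fun _ => Or.inr ⟨x, hxy.symm, hx⟩⟩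

theorem ExtendsToColoring.play [DecidableEq V] {c : V → Option (Fin 2)}
    (hc : ExtendsToColoring G c) {v : V} {a : Fin 2} (hmove : LegalMove true G c v a) :
    ExtendsToColoring G (play c v a) := by
  obtain ⟨C, hC⟩ := hc
  obtain ⟨⟨hv, hproper⟩, hconn⟩ := hmove
  suffices ∃ C' : G.Coloring (Fin 2), C' v = a ∧ ∀ w b, c w = some b → C' w = b by
    obtain ⟨C', hC'v, hC'⟩ := this
    refine ⟨C', fun w b hw => ?_⟩
    rcases eq_or_ne w v with rfl | hwv
    · simpa [ConnGame.play, hC'v] using hw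
    · exact hC' w b (by simpa [ConnGame.play, hwv] using hw)
  rcases hconn rfl with hempty | ⟨u, hvu, hu⟩
  · obtain ⟨C', hC'⟩ := C.exists_apply_eq v a
    exact ⟨C', hC', fun w b hw => by simp [hempty w] at hw⟩
  · obtain ⟨b, hub⟩ := Option.isSome_iff_exists.mp hu
    have hb : C u = b := hC u b hub
    have hab : a ≠ b := fun h => hproper u hvu (h ▸ hub)
    have hvb : C v ≠ b := hb ▸ C.valid hvu
    have two_colors : ∀ x y z : Fin 2, x ≠ z → y ≠ z → x = y := by decide
    exact ⟨C, two_colors _ _ _ hvb hab, hC⟩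

theorem card_none_play_lt [Fintype V] [DecidableEq V] {c : V → Option (Fin k)} {v : V}
    (hv : c v = none) (a : Fin k) :
    #{w | play c v a w = none} < #{w | c w = none} := by
  refine card_lt_card <| (ssubset_iff_of_subset fun w hw => ?_).mpr
    ⟨v, by simpa using hv, by simp only [mem_filter]; simp [play]⟩
  simp only [mem_filter, mem_univ, true_and] at hw ⊢
  rcases eq_or_ne w v with rfl | hwv
  · exact hv
  · simpa [play, hwv] using hw

theorem aliceWinsFrom_two_of_extendsToColoring [Fintype V] [DecidableEq V]
    (hG : G.Preconnected) :
    ∀ (n : ℕ) (aliceTurn : Bool) (c : V → Option (Fin 2)), ExtendsToColoring G c →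
      #{w | c w = none} ≤ n → AliceWinsFrom true G 2 n aliceTurn c
  | 0, _, c, _, hn => fun v => Option.ne_none_iff_isSome.mp fun hv =>
      (card_pos.mpr ⟨v, by simpa using hv⟩).ne' (Nat.le_zero.mp hn)
  | n + 1, aliceTurn, c, hc, hn => by
    rw [AliceWinsFrom]
    by_cases hall : ∀ v, (c v).isSome
    · exact Or.inl hall
    push Not at hall
    obtain ⟨v, hv⟩ := hall
    have hv : c v = none := by simpa using hv
    have next : ∀ w a, LegalMove true G c w a → ∀ b,
        AliceWinsFrom true G 2 n b (play c w a) := fun w a hmove b =>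
      aliceWinsFrom_two_of_extendsToColoring hG n b _ (hc.play hmove)
        (Nat.le_of_lt_succ ((card_none_play_lt hmove.1.1 a).trans_le hn))
    obtain ⟨w, a, hmove⟩ := exists_legalMove hG hc hv
    cases aliceTurn
    · exact Or.inr ⟨⟨w, a, hmove⟩, fun w a hmove => next w a hmove true⟩
    · exact Or.inr ⟨w, a, hmove, next w a hmove false⟩

end ConnGame

theorem aliceWins_two_of_bipartite_general {V : Type*} [Fintype V] [DecidableEq V]
    (G : SimpleGraph V) (hG : G.Connected) (hbip : G.Colorable 2) :
    ConnGame.AliceWinsColoringGame true G 2 ∧ ConnGame.connGameChromaticNumber G ≤ 2 := by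
  have hwin : ConnGame.AliceWinsColoringGame true G 2 :=
    ConnGame.aliceWinsFrom_two_of_extendsToColoring hG.preconnected _ _ _
      (ConnGame.extendsToColoring_none hbip) (Finset.card_le_univ _)
  exact ⟨hwin, Nat.sInf_le hwin⟩

/-- For every finite connected bipartite simple graph `G` with at least one
vertex, Alice wins the connected coloring game on `G` with 2 colors; consequently
`χ_cg(G) ≤ 2`. -/
theorem aliceWins_two_of_bipartite {V : Type*} [Fintype V] [DecidableEq V] [Nonempty V]
    (G : SimpleGraph V) (hG : G.Connected) (hbip : G.Colorable 2) :
    ConnGame.AliceWinsColoringGame true G 2 ∧ ConnGame.connGameChromaticNumber G ≤ 2 :=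
  aliceWins_two_of_bipartite_general G hG hbip
end

section
/- For every integer k ≥ 3, there exists a finite connected bipartite simple graph G_k such that Bob has a winning strategy in the connected graph coloring game on G_k with k colors. -/
open scoped Classical

/-!
The graph has a pool of `m ≥ 2k + 8` vertices, `m` anchors, a hub adjacent to all of them, and,
for every set `T` of pool vertices and every anchor `l`, `m` traps adjacent to `T` and to `l`;
the sides are pool ∪ anchors and hub ∪ traps.

Bob first gets two anchors colored differently: he colors the hub, then an anchor, then a fresh
anchor, which sees only the hub, in a third color. From then on he paints each color `col` by
coloring with `col` a fresh trap whose neighbors are the pool vertices still uncolored and an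
anchor of another color; this move is legal and keeps the colored set connected. Once all `k`
colors are painted every uncolored pool vertex sees all of them, and since a round colors only
two vertices, the pool is not exhausted before.
-/

namespace ConnGame

section General

theorem ite_zero_one_le_of_imp {P Q : Prop} [Decidable P] [Decidable Q] (h : P → Q) :
    (if Q then 0 else 1 : ℕ) ≤ if P then 0 else 1 := by
  split_ifs <;> simp_all

variable {V : Type*} {G : SimpleGraph V} {k : ℕ}

variable (G) in
def Blocked (c : V → Option (Fin k)) (v : V) : Prop :=
  c v = none ∧ ∀ a, ∃ w, G.Adj v w ∧ c w = some a

theorem exists_legalMove_of_adj {c : V → Option (Fin k)} {v w : V} (hv : c v = none)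
    (hnb : ¬ Blocked G c v) (hadj : G.Adj v w) (hw : (c w).isSome) :
    ∃ a, LegalMove true G c v a := by
  obtain ⟨a, ha⟩ : ∃ a, ∀ u, G.Adj v u → c u ≠ some a := by
    simpa [Blocked, hv] using hnb
  exact ⟨a, ⟨hv, ha⟩, fun _ => Or.inr ⟨w, hadj, hw⟩⟩

variable [DecidableEq V]

theorem play_apply_self (c : V → Option (Fin k)) (v : V) (a : Fin k) : play c v a v = some a :=
  Function.update_self v _ c

theorem play_apply_of_ne (c : V → Option (Fin k)) {v w : V} (h : w ≠ v) (a : Fin k) :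
    play c v a w = c w :=
  Function.update_of_ne h _ c

theorem play_apply_of_eq_some {c : V → Option (Fin k)} {v w : V} {x : Fin k} (hv : c v = none)
    (hw : c w = some x) (a : Fin k) : play c v a w = some x := by
  rw [play_apply_of_ne c (by rintro rfl; simp [hv] at hw) a, hw]

theorem eq_none_of_play_apply_eq_none {c : V → Option (Fin k)} {v w : V} {a : Fin k}
    (h : play c v a w = none) : c w = none := by
  by_cases hw : w = v
  · subst hw; simp [play_apply_self] at h
  · rwa [play_apply_of_ne c hw] at h

theorem isSome_play_apply {c : V → Option (Fin k)} {v w : V} (hv : c v = none)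
    (hw : (c w).isSome) (a : Fin k) : (play c v a w).isSome := by
  obtain ⟨x, hx⟩ := Option.isSome_iff_exists.mp hw
  simp [play_apply_of_eq_some hv hx]

theorem Blocked.play {c : V → Option (Fin k)} {w v : V} {a : Fin k} (hw : Blocked G c w)
    (hmove : ProperMove G c v a) : Blocked G (play c v a) w := by
  have hne : w ≠ v := by
    rintro rfl
    obtain ⟨u, hadj, hu⟩ := hw.2 a
    exact hmove.2 u hadj hu
  refine ⟨by rw [play_apply_of_ne c hne]; exact hw.1, fun b => ?_⟩
  obtain ⟨u, hadj, hu⟩ := hw.2 b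
  exact ⟨u, hadj, play_apply_of_eq_some hmove.1 hu a⟩

theorem bobWinsFrom_of_invariant (conn : Bool) (IA IB : (V → Option (Fin k)) → Prop)
    (hA : ∀ c, IA c → (∃ v, c v = none) ∧
      ∀ v a, LegalMove conn G c v a → IB (play c v a))
    (hB : ∀ c, IB c → (∃ v, c v = none) ∧ ((¬ ∃ v a, LegalMove conn G c v a) ∨
      ∃ v a, LegalMove conn G c v a ∧ IA (play c v a))) (n : ℕ) :
    (∀ c, IA c → BobWinsFrom conn G k n true c) ∧
      (∀ c, IB c → BobWinsFrom conn G k n false c) := by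
  induction n with
  | zero => exact ⟨fun c hc => (hA c hc).1, fun c hc => (hB c hc).1⟩
  | succ n ih =>
    refine ⟨fun c hc => ⟨(hA c hc).1, fun v a hmove => ih.2 _ ((hA c hc).2 v a hmove)⟩,
      fun c hc => ⟨(hB c hc).1, ?_⟩⟩
    obtain hstuck | ⟨v, a, hmove, hA'⟩ := (hB c hc).2
    · exact Or.inl hstuck
    · exact Or.inr ⟨v, a, hmove, ih.1 _ hA'⟩

variable [Fintype V]

def colored (c : V → Option (Fin k)) : Finset V :=
  Finset.univ.filter fun v => (c v).isSome

theorem card_colored_play {c : V → Option (Fin k)} {v : V} (hv : c v = none) (a : Fin k) :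
    (colored (play c v a)).card = (colored c).card + 1 := by
  have : colored (play c v a) = insert v (colored c) := by
    ext w
    by_cases hw : w = v
    · subst hw; simp [colored, play_apply_self]
    · simp [colored, play_apply_of_ne c hw, hw]
  rw [this, Finset.card_insert_of_notMem (by simp [colored, hv])]

theorem exists_apply_eq_none_of_card_colored_lt {ι : Type*} [Fintype ι]
    (c : V → Option (Fin k)) {f : ι → V} (hf : Function.Injective f)
    (h : (colored c).card < Fintype.card ι) : ∃ i, c (f i) = none := by
  obtain ⟨_, hv, hvc⟩ := Finset.exists_mem_notMem_of_card_lt_card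
    (h.trans_le (Finset.card_image_of_injective Finset.univ hf).ge)
  obtain ⟨i, -, rfl⟩ := Finset.mem_image.mp hv
  exact ⟨i, by simpa [colored] using hvc⟩

end General

namespace TrapGraph

abbrev Vertex (m : ℕ) : Type :=
  (Fin m ⊕ Fin m) ⊕ (Unit ⊕ (Finset (Fin m) × Fin m × Fin m))

variable {m : ℕ}

def pool (j : Fin m) : Vertex m := Sum.inl (Sum.inl j)
def anchor (l : Fin m) : Vertex m := Sum.inl (Sum.inr l)
def hub : Vertex m := Sum.inr (Sum.inl ())
def trap (T : Finset (Fin m)) (l i : Fin m) : Vertex m := Sum.inr (Sum.inr (T, l, i))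

-- The index `i` of `trap T l i` only provides spare copies.
def Link : Fin m ⊕ Fin m → Unit ⊕ (Finset (Fin m) × Fin m × Fin m) → Prop
  | _, Sum.inl _ => True
  | Sum.inl j, Sum.inr (T, _, _) => j ∈ T
  | Sum.inr l, Sum.inr (_, l', _) => l' = l

def trapAdj : Vertex m → Vertex m → Prop
  | Sum.inl x, Sum.inr y => Link x y
  | Sum.inr y, Sum.inl x => Link x y
  | _, _ => False

variable (m) in
def trapGraph : SimpleGraph (Vertex m) where
  Adj := trapAdj
  symm := ⟨by rintro (x | y) (x' | y') h <;> exact h⟩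
  loopless := ⟨by rintro (x | y) h <;> exact h⟩

theorem pool_adj_hub (j : Fin m) : (trapGraph m).Adj (pool j) hub := trivial

theorem anchor_adj_hub (l : Fin m) : (trapGraph m).Adj (anchor l) hub := trivial

theorem trap_adj_anchor (T : Finset (Fin m)) (l i : Fin m) :
    (trapGraph m).Adj (trap T l i) (anchor l) := rfl

theorem trapGraph_connected : (trapGraph m).Connected := by
  have : ∀ v, (trapGraph m).Reachable v hub := by
    rintro ((j | l) | (_ | ⟨T, l, i⟩))
    · exact (pool_adj_hub j).reachable
    · exact (anchor_adj_hub l).reachable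
    · rfl
    · exact (trap_adj_anchor T l i).reachable.trans (anchor_adj_hub l).reachable
  exact ⟨fun u v => (this u).trans (this v).symm⟩

theorem trapGraph_colorable_two : (trapGraph m).Colorable 2 :=
  ⟨⟨Sum.elim (fun _ => 0) (fun _ => 1), by
    rintro (x | y) (x' | y') h <;> first | exact h.elim | simp⟩⟩

variable {k : ℕ} {c : Vertex m → Option (Fin k)} {v : Vertex m} {a : Fin k}

def Painted (c : Vertex m → Option (Fin k)) (col : Fin k) : Prop :=
  ∃ T l i, c (trap T l i) = some col ∧ ∀ j, c (pool j) = none → j ∈ T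

noncomputable def unpainted (c : Vertex m → Option (Fin k)) : Finset (Fin k) :=
  Finset.univ.filter fun col => ¬ Painted c col

def HasColoredAnchor (c : Vertex m → Option (Fin k)) : Prop :=
  ∃ l, (c (anchor l)).isSome

def HasTwoAnchorColors (c : Vertex m → Option (Fin k)) : Prop :=
  ∃ l₁ l₂ g₁ g₂, c (anchor l₁) = some g₁ ∧ c (anchor l₂) = some g₂ ∧ g₁ ≠ g₂

noncomputable def openingDeficit (c : Vertex m → Option (Fin k)) : ℕ :=
  (if (c hub).isSome then 0 else 1) + (if HasColoredAnchor c then 0 else 1)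

noncomputable def potential (c : Vertex m → Option (Fin k)) : ℕ :=
  if HasTwoAnchorColors c then (unpainted c).card else k + 1 + openingDeficit c

theorem Painted.play {col : Fin k} (h : Painted c col) (hv : c v = none) :
    Painted (play c v a) col := by
  obtain ⟨T, l, i, hcol, hT⟩ := h
  exact ⟨T, l, i, play_apply_of_eq_some hv hcol a,
    fun j hj => hT j (eq_none_of_play_apply_eq_none hj)⟩

theorem unpainted_play_subset (hv : c v = none) : unpainted (play c v a) ⊆ unpainted c := by
  intro col
  simp only [unpainted, Finset.mem_filter, Finset.mem_univ, true_and]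
  exact mt fun h => h.play hv

theorem card_unpainted_le : (unpainted c).card ≤ k :=
  (Finset.card_le_univ _).trans_eq (Fintype.card_fin k)

theorem HasTwoAnchorColors.play (h : HasTwoAnchorColors c) (hv : c v = none) :
    HasTwoAnchorColors (play c v a) := by
  obtain ⟨l₁, l₂, g₁, g₂, h₁, h₂, hne⟩ := h
  exact ⟨l₁, l₂, g₁, g₂, play_apply_of_eq_some hv h₁ a, play_apply_of_eq_some hv h₂ a, hne⟩

theorem HasColoredAnchor.play (h : HasColoredAnchor c) (hv : c v = none) :
    HasColoredAnchor (play c v a) := by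
  obtain ⟨l, hl⟩ := h
  exact ⟨l, isSome_play_apply hv hl a⟩

theorem openingDeficit_play_le (hv : c v = none) :
    openingDeficit (play c v a) ≤ openingDeficit c :=
  add_le_add (ite_zero_one_le_of_imp fun h => isSome_play_apply hv h a)
    (ite_zero_one_le_of_imp fun h => h.play hv)

theorem potential_play_le (hv : c v = none) : potential (play c v a) ≤ potential c := by
  unfold potential
  by_cases h : HasTwoAnchorColors c
  · rw [if_pos h, if_pos (h.play hv)]
    exact Finset.card_le_card (unpainted_play_subset hv)
  · rw [if_neg h]
    split_ifs
    · exact card_unpainted_le.trans (by omega)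
    · exact Nat.add_le_add_left (openingDeficit_play_le hv) _

theorem potential_play_lt_of_not_hasTwoAnchorColors (h : ¬ HasTwoAnchorColors c)
    (hprogress : HasTwoAnchorColors (play c v a) ∨
      openingDeficit (play c v a) < openingDeficit c) :
    potential (play c v a) < potential c := by
  unfold potential
  rw [if_neg h]
  split_ifs with h'
  · exact card_unpainted_le.trans_lt (by omega)
  · have := hprogress.resolve_left h'
    omega

theorem openingDeficit_play_hub_lt (hhub : c hub = none) :
    openingDeficit (play c hub a) < openingDeficit c := by
  refine add_lt_add_of_lt_of_le ?_ (ite_zero_one_le_of_imp fun h => h.play hhub)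
  simp [play_apply_self, hhub]

theorem openingDeficit_play_anchor_lt (h : ¬ HasColoredAnchor c) (l : Fin m) :
    openingDeficit (play c (anchor l) a) < openingDeficit c := by
  have hl : c (anchor l) = none := by simpa [HasColoredAnchor] using not_exists.mp h l
  refine add_lt_add_of_le_of_lt (ite_zero_one_le_of_imp fun h => isSome_play_apply hl h a) ?_
  rw [if_pos ⟨l, by simp [play_apply_self]⟩, if_neg h]
  exact Nat.one_pos

theorem exists_pool_eq_none (hm : (colored c).card < m) : ∃ j, c (pool j) = none :=
  exists_apply_eq_none_of_card_colored_lt c (f := pool) (fun _ _ h => by simpa [pool] using h)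
    (by simpa using hm)

theorem exists_trap_eq_none (T : Finset (Fin m)) (l : Fin m) (hm : (colored c).card < m) :
    ∃ i, c (trap T l i) = none :=
  exists_apply_eq_none_of_card_colored_lt c (f := trap T l)
    (fun _ _ h => by simpa [trap] using h) (by simpa using hm)

-- Pigeonhole over the families `{anchor l} ∪ {trap T l i}`, which are disjoint.
def anchorIndex : Vertex m → Option (Fin m)
  | Sum.inl (Sum.inr l) => some l
  | Sum.inr (Sum.inr (_, l, _)) => some l
  | _ => none

theorem exists_fresh_anchor (hm : (colored c).card < m) :
    ∃ l, c (anchor l) = none ∧ ∀ T i, c (trap T l i) = none := by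
  obtain ⟨_, hl, hfresh⟩ := Finset.exists_mem_notMem_of_card_lt_card
    (s := (colored c).image anchorIndex) (t := Finset.univ.image some)
    (Finset.card_image_le.trans_lt
      (hm.trans_eq (by simp [Finset.card_image_of_injective _ (Option.some_injective _)])))
  obtain ⟨l, -, rfl⟩ := Finset.mem_image.mp hl
  have hfresh' : ∀ v, anchorIndex v = some l → c v = none := fun v hv => by
    by_contra hc
    exact hfresh (Finset.mem_image.mpr
      ⟨v, by simpa [colored, Option.isSome_iff_ne_none] using hc, hv⟩)
  exact ⟨l, hfresh' _ rfl, fun T i => hfresh' _ rfl⟩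

theorem blocked_pool_of_unpainted_eq_empty (h : unpainted c = ∅) {j : Fin m}
    (hj : c (pool j) = none) : Blocked (trapGraph m) c (pool j) := by
  refine ⟨hj, fun col => ?_⟩
  obtain ⟨T, l, i, hcol, hT⟩ : Painted c col := by
    by_contra hcol
    simpa [h] using (show col ∈ unpainted c by simpa [unpainted] using hcol)
  exact ⟨trap T l i, hT j hj, hcol⟩

theorem exists_paint_move (h2 : HasTwoAnchorColors c) {col : Fin k} (hcol : col ∈ unpainted c)
    (hm : (colored c).card < m) :
    ∃ v, LegalMove true (trapGraph m) c v col ∧ potential (play c v col) < potential c := by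
  obtain ⟨l, g, hl, hg⟩ : ∃ l g, c (anchor l) = some g ∧ g ≠ col := by
    obtain ⟨l₁, l₂, g₁, g₂, h₁, h₂, hne⟩ := h2
    by_cases hg : g₁ = col
    · exact ⟨l₂, g₂, h₂, fun h => hne (hg.trans h.symm)⟩
    · exact ⟨l₁, g₁, h₁, hg⟩
  set T := Finset.univ.filter fun j => c (pool j) = none
  obtain ⟨i, hi⟩ := exists_trap_eq_none T l hm
  have hproper : ProperMove (trapGraph m) c (trap T l i) col := by
    refine ⟨hi, ?_⟩
    rintro ((j | l') | _) hadj
    · change j ∈ T at hadj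
      change c (pool j) ≠ some col
      simp_all [T]
    · obtain rfl : l = l' := hadj
      change c (anchor l) ≠ some col
      simpa [hl] using hg
    · exact hadj.elim
  have hpainted : Painted (play c (trap T l i) col) col :=
    ⟨T, l, i, play_apply_self .., fun j hj => by
      simpa [T] using eq_none_of_play_apply_eq_none hj⟩
  refine ⟨trap T l i,
    ⟨hproper, fun _ => Or.inr ⟨anchor l, trap_adj_anchor T l i, by simp [hl]⟩⟩, ?_⟩
  unfold potential
  rw [if_pos h2, if_pos (h2.play hi)]
  refine Finset.card_lt_card ⟨unpainted_play_subset hi, fun hsub => ?_⟩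
  simpa [unpainted, hpainted] using hsub hcol

theorem exists_opening_move_of_hub_eq_none (hhub : c hub = none)
    (hnb : ∀ v, ¬ Blocked (trapGraph m) c v) (hpos : 0 < (colored c).card) :
    ∃ v a, LegalMove true (trapGraph m) c v a ∧
      openingDeficit (play c v a) < openingDeficit c := by
  by_cases hnbr : ∃ w, (trapGraph m).Adj hub w ∧ (c w).isSome
  · obtain ⟨w, hadj, hw⟩ := hnbr
    obtain ⟨a, ha⟩ := exists_legalMove_of_adj hhub (hnb hub) hadj hw
    exact ⟨hub, a, ha, openingDeficit_play_hub_lt hhub⟩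
  simp only [not_exists, not_and] at hnbr
  have hanchor : ¬ HasColoredAnchor c := fun ⟨l, hl⟩ =>
    hnbr (anchor l) (anchor_adj_hub l).symm hl
  obtain ⟨v, hv⟩ := Finset.card_pos.mp hpos
  simp only [colored, Finset.mem_filter, Finset.mem_univ, true_and] at hv
  rcases v with ((j | l) | (⟨⟩ | ⟨T, l, i⟩))
  · exact absurd hv (hnbr (pool j) (pool_adj_hub j).symm)
  · exact absurd ⟨l, hv⟩ hanchor
  · exact absurd hv (Option.not_isSome_iff_eq_none.mpr hhub)
  · have hl : c (anchor l) = none := by simpa [HasColoredAnchor] using not_exists.mp hanchor l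
    obtain ⟨a, ha⟩ := exists_legalMove_of_adj hl (hnb _) (trap_adj_anchor T l i).symm hv
    exact ⟨anchor l, a, ha, openingDeficit_play_anchor_lt hanchor l⟩

theorem exists_opening_move_of_hub_isSome (hk : 3 ≤ k) (hhub : (c hub).isSome)
    (hnb : ∀ v, ¬ Blocked (trapGraph m) c v) (hm : (colored c).card < m) :
    ∃ v a, LegalMove true (trapGraph m) c v a ∧
      (HasTwoAnchorColors (play c v a) ∨ openingDeficit (play c v a) < openingDeficit c) := by
  obtain ⟨l, hl, htraps⟩ := exists_fresh_anchor hm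
  by_cases hanchor : HasColoredAnchor c
  · obtain ⟨l₀, hl₀⟩ := hanchor
    obtain ⟨g, hg⟩ := Option.isSome_iff_exists.mp hl₀
    obtain ⟨h, hh⟩ := Option.isSome_iff_exists.mp hhub
    obtain ⟨d, hdh, hdg⟩ := Fin.exists_ne_and_ne_of_two_lt h g hk
    have hproper : ProperMove (trapGraph m) c (anchor l) d := by
      refine ⟨hl, ?_⟩
      rintro ((_ | _) | (⟨⟩ | ⟨T, l', i⟩)) hadj
      · exact hadj.elim
      · exact hadj.elim
      · change c hub ≠ some d
        simpa [hh] using hdh.symm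
      · obtain rfl : l' = l := hadj
        change c (trap T l' i) ≠ some d
        simp [htraps]
    exact ⟨anchor l, d, ⟨hproper, fun _ => Or.inr ⟨hub, anchor_adj_hub l, hhub⟩⟩,
      Or.inl ⟨l₀, l, g, d, play_apply_of_eq_some hl hg d, play_apply_self .., hdg.symm⟩⟩
  · obtain ⟨a, ha⟩ := exists_legalMove_of_adj hl (hnb _) (anchor_adj_hub l) hhub
    exact ⟨anchor l, a, ha, Or.inr (openingDeficit_play_anchor_lt hanchor l)⟩

theorem exists_potential_lt_move (hk : 3 ≤ k) (hnb : ∀ v, ¬ Blocked (trapGraph m) c v)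
    (hpos : 0 < (colored c).card) (hm : (colored c).card < m) :
    ∃ v a, LegalMove true (trapGraph m) c v a ∧ potential (play c v a) < potential c := by
  by_cases h2 : HasTwoAnchorColors c
  · obtain ⟨col, hcol⟩ : (unpainted c).Nonempty := by
      rw [Finset.nonempty_iff_ne_empty]
      intro h
      obtain ⟨j, hj⟩ := exists_pool_eq_none hm
      exact hnb _ (blocked_pool_of_unpainted_eq_empty h hj)
    obtain ⟨v, hv, hlt⟩ := exists_paint_move h2 hcol hm
    exact ⟨v, col, hv, hlt⟩
  obtain ⟨v, a, hv, hprogress⟩ : ∃ v a, LegalMove true (trapGraph m) c v a ∧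
      (HasTwoAnchorColors (play c v a) ∨ openingDeficit (play c v a) < openingDeficit c) := by
    by_cases hhub : c hub = none
    · obtain ⟨v, a, hv, hlt⟩ := exists_opening_move_of_hub_eq_none hhub hnb hpos
      exact ⟨v, a, hv, Or.inr hlt⟩
    · exact exists_opening_move_of_hub_isSome hk (Option.ne_none_iff_isSome.mp hhub) hnb hm
  exact ⟨v, a, hv, potential_play_lt_of_not_hasTwoAnchorColors h2 hprogress⟩

/-- Bob's invariant, with `s = 0` when Alice is to move and `s = 1` when Bob is. A full round
colors two vertices and lowers the potential, which starts at `k + 3`, so fewer than `2 * k + 8`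
vertices get colored before a vertex is blocked. -/
def BobAhead (s : ℕ) (c : Vertex m → Option (Fin k)) : Prop :=
  (∃ v, Blocked (trapGraph m) c v) ∨
    (s ≤ (colored c).card ∧ (colored c).card + 2 * potential c ≤ 2 * k + 6 + s)

theorem bobAhead_empty : BobAhead 0 (fun _ : Vertex m => (none : Option (Fin k))) :=
  Or.inr ⟨Nat.zero_le _, by
    simp [colored, potential, HasTwoAnchorColors, openingDeficit, HasColoredAnchor]; omega⟩

theorem BobAhead.exists_eq_none {s : ℕ} (h : BobAhead s c) (hs : s ≤ 1) (hm : 2 * k + 8 ≤ m) :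
    ∃ v, c v = none := by
  rcases h with ⟨v, hv⟩ | ⟨-, hbudget⟩
  · exact ⟨v, hv.1⟩
  · obtain ⟨j, hj⟩ := exists_pool_eq_none (c := c) (by omega)
    exact ⟨pool j, hj⟩

theorem BobAhead.play_of_properMove (h : BobAhead 0 c) (hmove : ProperMove (trapGraph m) c v a) :
    BobAhead 1 (play c v a) := by
  rcases h with hbl | ⟨-, hbudget⟩
  · exact Or.inl (hbl.imp fun w hw => hw.play hmove)
  · have := potential_play_le (a := a) hmove.1
    rw [BobAhead, card_colored_play hmove.1]
    omega

theorem BobAhead.exists_reply (hk : 3 ≤ k) (hm : 2 * k + 8 ≤ m) (h : BobAhead 1 c) :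
    (¬ ∃ v a, LegalMove true (trapGraph m) c v a) ∨
      ∃ v a, LegalMove true (trapGraph m) c v a ∧ BobAhead 0 (play c v a) := by
  by_cases hbl : ∃ v, Blocked (trapGraph m) c v
  · by_cases hmove : ∃ v a, LegalMove true (trapGraph m) c v a
    · obtain ⟨v, a, hmove⟩ := hmove
      exact Or.inr ⟨v, a, hmove, Or.inl (hbl.imp fun w hw => hw.play hmove.1)⟩
    · exact Or.inl hmove
  obtain ⟨hpos, hbudget⟩ := h.resolve_left hbl
  obtain ⟨v, a, hmove, hlt⟩ :=
    exists_potential_lt_move hk (not_exists.mp hbl) hpos (by omega)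
  refine Or.inr ⟨v, a, hmove, Or.inr ⟨Nat.zero_le _, ?_⟩⟩
  rw [card_colored_play hmove.1.1]
  omega

theorem bobWinsColoringGame_trapGraph (hk : 3 ≤ k) (hm : 2 * k + 8 ≤ m) :
    BobWinsColoringGame true (trapGraph m) k :=
  (bobWinsFrom_of_invariant true (BobAhead 0) (BobAhead 1)
    (fun _ h => ⟨BobAhead.exists_eq_none h zero_le_one hm,
      fun _ _ hmove => BobAhead.play_of_properMove h hmove.1⟩)
    (fun _ h => ⟨BobAhead.exists_eq_none h le_rfl hm, BobAhead.exists_reply hk hm h⟩) _).1 _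
    bobAhead_empty

end TrapGraph

end ConnGame

/-- For every integer `k ≥ 3`, there exists a finite connected bipartite
simple graph on which Bob wins the connected coloring game with `k` colors. -/
theorem exists_bipartite_bobWins (k : ℕ) (hk : 3 ≤ k) :
    ∃ (V : Type) (iF : Fintype V) (iD : DecidableEq V) (G : SimpleGraph V),
      G.Connected ∧ G.Colorable 2 ∧ @ConnGame.BobWinsColoringGame V iF iD true G k :=
  ⟨_, inferInstance, inferInstance, ConnGame.TrapGraph.trapGraph (2 * k + 8),
    ConnGame.TrapGraph.trapGraph_connected, ConnGame.TrapGraph.trapGraph_colorable_two,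
    ConnGame.TrapGraph.bobWinsColoringGame_trapGraph hk le_rfl⟩
end

section
/- There exists a finite connected outerplanar simple graph G with connected game coloring number at least 4, i.e., col_cg(G) ≥ 4. -/
open scoped Classical

/-!
The example is the fan on six vertices: a hub `0` joined to every vertex of the path
`1 - 2 - 3 - 4 - 5`. Deleting the hub leaves a path, so in a minor model of any graph in the
fan all branch sets but (at most) the one containing the hub are intervals of that path, and
adjacent ones are consecutive intervals. Deleting one vertex of `K₄` leaves a triangle and
deleting one of `K_{2,3}` leaves a claw or a `4`-cycle, none of which a family of disjoint
intervals on a line can realize; hence the fan is outerplanar. That Bob can force an unmarked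
vertex with three marked neighbours, while Alice can prevent four, is a finite search of the
game tree.
-/

theorem Set.lt_or_lt_of_disjoint_Icc {α : Type*} [LinearOrder α] {a₁ a₂ b₁ b₂ : α}
    (ha : a₁ ≤ a₂) (hb : b₁ ≤ b₂) (h : Disjoint (Set.Icc a₁ a₂) (Set.Icc b₁ b₂)) :
    a₂ < b₁ ∨ b₂ < a₁ := by
  by_contra! hc
  have h₁ : max a₁ b₁ ∈ Set.Icc a₁ a₂ := ⟨le_max_left .., max_le ha hc.1⟩
  exact Set.disjoint_left.mp h h₁ ⟨le_max_right .., max_le hc.2 hb⟩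

namespace ConnGame

section MarkingGame

variable {V : Type*} {G : SimpleGraph V} {conn : Bool} {k k' : ℕ}

theorem MarkGood.mono {M : Finset V} (hk : k ≤ k') (h : MarkGood G k M) : MarkGood G k' M :=
  fun v hv => (h v hv).trans_le hk

variable [DecidableEq V]

theorem AliceWinsMarkingFrom.mono (hk : k ≤ k') :
    ∀ {n b M}, AliceWinsMarkingFrom conn G k n b M → AliceWinsMarkingFrom conn G k' n b M
  | 0, _, _, h => MarkGood.mono hk h
  | _ + 1, true, _, ⟨hM, v, hv, h⟩ => ⟨hM.mono hk, v, hv, mono hk h⟩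
  | _ + 1, false, _, ⟨hM, h⟩ => ⟨hM.mono hk, fun v hv => mono hk (h v hv)⟩

variable [Fintype V]

theorem lt_connGameColoringNumber (hk : AliceWinsMarkingGame true G k)
    (hk' : ¬ AliceWinsMarkingGame true G k') : k' < connGameColoringNumber G := by
  by_contra! h
  have hmem : AliceWinsMarkingGame true G (connGameColoringNumber G) :=
    Nat.sInf_mem (s := {k | AliceWinsMarkingGame true G k}) ⟨k, hk⟩
  exact hk' (AliceWinsMarkingFrom.mono h hmem)

theorem connGameColoringNumber_eq_succ (hk : AliceWinsMarkingGame true G (k + 1))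
    (hk' : ¬ AliceWinsMarkingGame true G k) : connGameColoringNumber G = k + 1 :=
  le_antisymm (Nat.sInf_le hk) (lt_connGameColoringNumber hk hk')

end MarkingGame

section Decidable

variable {V : Type*} [DecidableEq V] {G : SimpleGraph V} [DecidableRel G.Adj] {conn : Bool}
  {k : ℕ}

instance (M : Finset V) (v : V) : Decidable (MarkLegal conn G M v) := by
  unfold MarkLegal; infer_instance

variable [Fintype V]

-- `MarkGood` was elaborated with the classical instance for `G.Adj`, which does not compute.
instance (M : Finset V) : Decidable (MarkGood G k M) :=
  decidable_of_iff (∀ v ∉ M, (M.filter fun u => G.Adj u v).card < k) <| by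
    unfold MarkGood; congr!

instance decidableAliceWinsMarkingFrom :
    ∀ n b M, Decidable (AliceWinsMarkingFrom conn G k n b M)
  | 0, _, _ => by unfold AliceWinsMarkingFrom; infer_instance
  | n + 1, _, _ =>
    have := decidableAliceWinsMarkingFrom n
    by unfold AliceWinsMarkingFrom; infer_instance

instance : Decidable (AliceWinsMarkingGame conn G k) := by
  unfold AliceWinsMarkingGame; infer_instance

end Decidable

def fan (n : ℕ) : SimpleGraph (Fin (n + 1)) :=
  SimpleGraph.fromRel fun i j => i = 0 ∨ (i : ℕ) + 1 = j

instance (n : ℕ) : DecidableRel (fan n).Adj := fun i j =>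
  decidable_of_iff' _ (SimpleGraph.fromRel_adj _ i j)

variable {n : ℕ}

theorem fan_adj_zero {v : Fin (n + 1)} (hv : v ≠ 0) : (fan n).Adj 0 v :=
  (SimpleGraph.fromRel_adj _ _ _).mpr ⟨hv.symm, .inl (.inl rfl)⟩

theorem fan_adj_iff_of_ne_zero {u v : Fin (n + 1)} (hu : u ≠ 0) (hv : v ≠ 0) :
    (fan n).Adj u v ↔ (u : ℕ) + 1 = v ∨ (v : ℕ) + 1 = u := by
  rw [fan, SimpleGraph.fromRel_adj]
  constructor
  · rintro ⟨-, h | h⟩ <;> simp_all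
  · rintro h
    refine ⟨fun huv => ?_, by tauto⟩
    subst huv
    omega

theorem fan_connected : (fan n).Connected := by
  refine (SimpleGraph.connected_iff_exists_forall_reachable _).mpr ⟨0, fun v => ?_⟩
  obtain rfl | hv := eq_or_ne v 0
  · rfl
  · exact (fan_adj_zero hv).reachable

theorem mem_of_walk_fan_induce {s : Set (Fin (n + 1))} (h0 : 0 ∉ s) {x y : s}
    (p : ((fan n).induce s).Walk x y) {z : Fin (n + 1)}
    (hz : x ≤ z ∧ z ≤ y ∨ y ≤ z ∧ z ≤ x) : z ∈ s := by
  induction p with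
  | @nil u =>
    obtain rfl : z = u := by omega
    exact u.2
  | @cons a w _ hadj _ ih =>
    obtain rfl | hza := eq_or_ne z a
    · exact a.2
    have hstep := (fan_adj_iff_of_ne_zero (ne_of_mem_of_not_mem a.2 h0)
      (ne_of_mem_of_not_mem w.2 h0)).mp hadj
    exact ih (by omega)

theorem eq_Icc_of_fan_induce_connected {s : Set (Fin (n + 1))} (h0 : 0 ∉ s)
    (hs : ((fan n).induce s).Connected) : s = Set.Icc (sInf s) (sSup s) := by
  have : s.OrdConnected :=
    ⟨fun x hx y hy _ hz => mem_of_walk_fan_induce h0 (hs ⟨x, hx⟩ ⟨y, hy⟩).some (.inl hz)⟩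
  exact (Set.nonempty_coe_sort.mp hs.nonempty).ordConnected_iff_of_bdd'.mp this

theorem IsMinorOf.exists_fan_intervals {W : Type*} [Nonempty W] {H : SimpleGraph W}
    (h : IsMinorOf H (fan n)) :
    ∃ (w₀ : W) (lo hi : W → Fin (n + 1)), (∀ w ≠ w₀, lo w ≤ hi w) ∧
      (∀ w w', w ≠ w₀ → w' ≠ w₀ → w ≠ w' → hi w < lo w' ∨ hi w' < lo w) ∧
      (∀ w w', w ≠ w₀ → w' ≠ w₀ → H.Adj w w' →
        (hi w : ℕ) + 1 = lo w' ∨ (hi w' : ℕ) + 1 = lo w) := by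
  obtain ⟨f, hne, hconn, hdisj, hadj⟩ := h
  obtain ⟨w₀, hw₀⟩ : ∃ w₀, ∀ w ≠ w₀, 0 ∉ f w := by
    by_cases hhub : ∃ w, 0 ∈ f w
    · obtain ⟨w₀, h₀⟩ := hhub
      exact ⟨w₀, fun w hw h => Set.disjoint_left.mp (hdisj w₀ w hw.symm) h₀ h⟩
    · push Not at hhub
      exact ⟨Classical.arbitrary W, fun w _ => hhub w⟩
  have hIcc (w) (hw : w ≠ w₀) := eq_Icc_of_fan_induce_connected (hw₀ w hw) (hconn w)
  have hle (w) (hw : w ≠ w₀) : sInf (f w) ≤ sSup (f w) := by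
    obtain ⟨x, hx⟩ := hne w
    rw [hIcc w hw] at hx
    exact hx.1.trans hx.2
  have hsep (w w') (hw : w ≠ w₀) (hw' : w' ≠ w₀) (hww' : w ≠ w') :
      sSup (f w) < sInf (f w') ∨ sSup (f w') < sInf (f w) := by
    have hd := hdisj w w' hww'
    rw [hIcc w hw, hIcc w' hw'] at hd
    exact Set.lt_or_lt_of_disjoint_Icc (hle w hw) (hle w' hw') hd
  refine ⟨w₀, fun w => sInf (f w), fun w => sSup (f w), hle, hsep, fun w w' hw hw' hww' => ?_⟩
  obtain ⟨u, hu, v, hv, huv⟩ := hadj w w' hww'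
  have hstep := (fan_adj_iff_of_ne_zero (ne_of_mem_of_not_mem hu (hw₀ w hw))
    (ne_of_mem_of_not_mem hv (hw₀ w' hw'))).mp huv
  rw [hIcc w hw, Set.mem_Icc] at hu
  rw [hIcc w' hw', Set.mem_Icc] at hv
  have := hsep w w' hw hw' hww'.ne
  beta_reduce
  omega

theorem fan_not_isMinorOf_K4 : ¬ IsMinorOf (SimpleGraph.completeGraph (Fin 4)) (fan n) := by
  intro h
  obtain ⟨w₀, lo, hi, hle, -, htouch⟩ := h.exists_fan_intervals
  -- the triangle `w₀ + 1, w₀ + 2, w₀ + 3` avoids the hub's branch set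
  have hne : ∀ w : Fin 4, w + 1 ≠ w ∧ w + 2 ≠ w ∧ w + 3 ≠ w ∧
      w + 1 ≠ w + 2 ∧ w + 1 ≠ w + 3 ∧ w + 2 ≠ w + 3 := by decide
  obtain ⟨h1, h2, h3, h12, h13, h23⟩ := hne w₀
  have := hle _ h1
  have := hle _ h2
  have := hle _ h3
  have := htouch _ _ h1 h2 h12
  have := htouch _ _ h1 h3 h13
  have := htouch _ _ h2 h3 h23
  omega

theorem fan_not_isMinorOf_K23 :
    ¬ IsMinorOf (completeBipartiteGraph (Fin 2) (Fin 3)) (fan n) := by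
  intro h
  obtain ⟨w₀, lo, hi, hle, hsep, htouch⟩ := h.exists_fan_intervals
  have hadj (i : Fin 2) (j : Fin 3) :
      (completeBipartiteGraph (Fin 2) (Fin 3)).Adj (.inl i) (.inr j) := by simp
  rcases w₀ with i | j
  · -- a claw centred at `inl (i + 1)`
    have hc : (Sum.inl (i + 1) : Fin 2 ⊕ Fin 3) ≠ .inl i :=
      (by decide : ∀ i : Fin 2, (Sum.inl (i + 1) : Fin 2 ⊕ Fin 3) ≠ .inl i) i
    have hl (j : Fin 3) : (Sum.inr j : Fin 2 ⊕ Fin 3) ≠ .inl i := Sum.inr_ne_inl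
    have := hle _ (hl 0)
    have := hle _ (hl 1)
    have := hle _ (hl 2)
    have := htouch _ _ hc (hl 0) (hadj _ 0)
    have := htouch _ _ hc (hl 1) (hadj _ 1)
    have := htouch _ _ hc (hl 2) (hadj _ 2)
    have := hsep _ _ (hl 0) (hl 1) (by decide)
    have := hsep _ _ (hl 0) (hl 2) (by decide)
    have := hsep _ _ (hl 1) (hl 2) (by decide)
    omega
  · -- a `4`-cycle through `inr (j + 1)` and `inr (j + 2)`
    have hx (i : Fin 2) : (Sum.inl i : Fin 2 ⊕ Fin 3) ≠ .inr j := Sum.inl_ne_inr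
    have hy : ∀ j : Fin 3, (Sum.inr (j + 1) : Fin 2 ⊕ Fin 3) ≠ .inr j ∧
        (Sum.inr (j + 2) : Fin 2 ⊕ Fin 3) ≠ .inr j ∧
        (Sum.inr (j + 1) : Fin 2 ⊕ Fin 3) ≠ .inr (j + 2) := by decide
    obtain ⟨hy₁, hy₂, hy₁₂⟩ := hy j
    have := hle _ (hx 0)
    have := hle _ (hx 1)
    have := hle _ hy₁
    have := hle _ hy₂
    have := htouch _ _ (hx 0) hy₁ (hadj 0 _)
    have := htouch _ _ (hx 0) hy₂ (hadj 0 _)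
    have := htouch _ _ (hx 1) hy₁ (hadj 1 _)
    have := htouch _ _ (hx 1) hy₂ (hadj 1 _)
    have := hsep _ _ (hx 0) (hx 1) (by decide)
    have := hsep _ _ hy₁ hy₂ hy₁₂
    omega

theorem fan_outerplanar : Outerplanar (fan n) :=
  ⟨fan_not_isMinorOf_K4, fan_not_isMinorOf_K23⟩

theorem aliceWinsMarkingGame_fan_five_four : AliceWinsMarkingGame true (fan 5) 4 := by
  decide

theorem not_aliceWinsMarkingGame_fan_five_three : ¬ AliceWinsMarkingGame true (fan 5) 3 := by
  decide

theorem connGameColoringNumber_fan_five : connGameColoringNumber (fan 5) = 4 :=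
  connGameColoringNumber_eq_succ aliceWinsMarkingGame_fan_five_four
    not_aliceWinsMarkingGame_fan_five_three

end ConnGame

/-- There exists a finite connected outerplanar simple graph `G` with
connected game coloring number at least 4. -/
theorem exists_outerplanar_four_le_connGameColoringNumber :
    ∃ (V : Type) (iF : Fintype V) (iD : DecidableEq V) (G : SimpleGraph V),
      @ConnGame.Outerplanar V G ∧ G.Connected ∧
        4 ≤ @ConnGame.connGameColoringNumber V iF iD G :=
  ⟨Fin 6, inferInstance, inferInstance, ConnGame.fan 5, ConnGame.fan_outerplanar,
    ConnGame.fan_connected, ConnGame.connGameColoringNumber_fan_five.ge⟩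
end

section
/- Let G be the simple graph on vertex set {v₀, v₁, v₂, v₃, v₄, v₅} with edge set {v₀v₁, v₀v₅, v₁v₂, v₁v₄, v₁v₅, v₂v₃, v₂v₄, v₃v₄, v₄v₅}. Then Alice has a winning strategy in the connected graph coloring game on G with 4 colors. -/
/-!
The game tree is finite: there are at most `5^6` positions and every move colors a new vertex.
Hence whether Alice wins is decidable by exhaustive search over the tree, and for `paperGraph`
with four colors the search is carried out by the kernel.
-/

open scoped Classical

/-- The graph on vertices `v₀, …, v₅` with edge set
`{v₀v₁, v₀v₅, v₁v₂, v₁v₄, v₁v₅, v₂v₃, v₂v₄, v₃v₄, v₄v₅}`. -/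
def paperGraph : SimpleGraph (Fin 6) :=
  SimpleGraph.fromRel (fun i j =>
    (i, j) ∈ ([(0, 1), (0, 5), (1, 2), (1, 4), (1, 5), (2, 3), (2, 4), (3, 4), (4, 5)] :
      List (Fin 6 × Fin 6)))

namespace ConnGame

variable {V : Type*} [Fintype V] [DecidableEq V] (G : SimpleGraph V) [DecidableRel G.Adj]

instance {k : ℕ} (c : V → Option (Fin k)) (v : V) (a : Fin k) :
    Decidable (ProperMove G c v a) :=
  inferInstanceAs (Decidable (_ ∧ _))

instance {k : ℕ} (c : V → Option (Fin k)) (v : V) : Decidable (ConnMove G c v) :=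
  inferInstanceAs (Decidable (_ ∨ _))

instance (conn : Bool) {k : ℕ} (c : V → Option (Fin k)) (v : V) (a : Fin k) :
    Decidable (LegalMove conn G c v a) :=
  inferInstanceAs (Decidable (_ ∧ _))

-- Built by `inferInstanceAs` on the unfolded body rather than by rewriting with the equation
-- lemmas, whose `propext` casts would block kernel evaluation.
instance decidableAliceWinsFrom (conn : Bool) (k : ℕ) :
    ∀ (n : ℕ) (aliceTurn : Bool) (c : V → Option (Fin k)),
      Decidable (AliceWinsFrom conn G k n aliceTurn c)
  | 0, _, c => inferInstanceAs (Decidable (∀ v, (c v).isSome))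
  | n + 1, aliceTurn, c =>
    haveI := decidableAliceWinsFrom conn k n
    inferInstanceAs (Decidable ((∀ v, (c v).isSome) ∨
      (if aliceTurn then
        ∃ v a, LegalMove conn G c v a ∧ AliceWinsFrom conn G k n false (play c v a)
      else
        (∃ v a, LegalMove conn G c v a) ∧
          ∀ v a, LegalMove conn G c v a → AliceWinsFrom conn G k n true (play c v a))))

instance (conn : Bool) (k : ℕ) : Decidable (AliceWinsColoringGame conn G k) :=
  decidableAliceWinsFrom G conn k _ true _

end ConnGame

instance : DecidableRel paperGraph.Adj := fun a b =>
  inferInstanceAs (Decidable (a ≠ b ∧ (_ ∨ _)))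

/-- Alice has a winning strategy in the connected coloring game on the
graph above with 4 colors. -/
theorem aliceWins_paperGraph_four :
    ConnGame.AliceWinsColoringGame true paperGraph 4 := by
  decide +kernel
end

section
/- For every integer n ≥ 1, there exists a finite connected bipartite simple graph G such that χ_g(G) − χ_cg(G) ≥ n; in other words, the difference between the game chromatic number and the connected game chromatic number can be arbitrarily large. (One may take G = K_{m,m} minus a perfect matching for m large, using χ_g(K_{m,m} − M) = m and χ_cg(G) ≤ 2.) -/
open scoped Classical

/-!
On the crown graph `K_{m,m} - M`, Bob wins the ordinary game with fewer than `m` colors by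
mirroring: he answers every move with the same color on the matching partner of the vertex
just colored. A color Alice plays is then new, since the vertex she colors sees every colored
pair except its own, so each color is used on at most one matched pair and some pair stays
uncolored. In the connected game on a connected bipartite graph, every legal move agrees with
the bipartition up to swapping the two colors, because the new vertex has a colored neighbor;
hence any legal move keeps a legal move available and two colors suffice.
-/

namespace ConnGame

open Finset

variable {V : Type*} {G : SimpleGraph V}

section Invariant

variable [Fintype V] [DecidableEq V] {conn : Bool} {k : ℕ}

def uncolored (c : V → Option (Fin k)) : Finset V :=
  univ.filter fun v => c v = none

lemma uncolored_play {c : V → Option (Fin k)} {v : V} (a : Fin k) :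
    uncolored (play c v a) = (uncolored c).erase v := by
  ext u
  by_cases huv : u = v <;> simp [uncolored, play, Function.update_apply, huv]

lemma card_uncolored_play {c : V → Option (Fin k)} {v : V} (a : Fin k) (hv : c v = none) :
    #(uncolored (play c v a)) + 1 = #(uncolored c) := by
  rw [uncolored_play, card_erase_add_one]
  simpa [uncolored] using hv

theorem aliceWinsFrom_of_invariant (P : (V → Option (Fin k)) → Prop)
    (hmove : ∀ c, P c → (∃ v, c v = none) → ∃ v a, LegalMove conn G c v a)
    (hpres : ∀ c v a, P c → LegalMove conn G c v a → P (play c v a)) :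
    ∀ n t c, P c → #(uncolored c) ≤ n → AliceWinsFrom conn G k n t c := by
  intro n
  induction n with
  | zero =>
    intro t c _ hc v
    rw [Option.isSome_iff_ne_none]
    intro hv
    have : v ∈ uncolored c := by simpa [uncolored] using hv
    simp_all
  | succ n ih =>
    intro t c hP hc
    by_cases hall : ∀ v, (c v).isSome
    · exact Or.inl hall
    right
    push Not at hall
    obtain ⟨v, a, hlegal⟩ := hmove c hP (by simpa using hall)
    have hnext : ∀ t' v a, LegalMove conn G c v a → AliceWinsFrom conn G k n t' (play c v a) :=
      fun t' v a hl => ih t' _ (hpres c v a hP hl)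
        (by have := card_uncolored_play a hl.1.1; omega)
    cases t
    · exact ⟨⟨v, a, hlegal⟩, fun v a hl => hnext true v a hl⟩
    · exact ⟨v, a, hlegal, hnext false v a hlegal⟩

theorem aliceWinsColoringGame_of_invariant (P : (V → Option (Fin k)) → Prop)
    (hinit : P fun _ => none)
    (hmove : ∀ c, P c → (∃ v, c v = none) → ∃ v a, LegalMove conn G c v a)
    (hpres : ∀ c v a, P c → LegalMove conn G c v a → P (play c v a)) :
    AliceWinsColoringGame conn G k :=
  aliceWinsFrom_of_invariant P hmove hpres _ _ _ hinit (card_le_univ _)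

end Invariant

lemma exists_properMove_of_degree_lt [Fintype V] {k : ℕ} {c : V → Option (Fin k)} {v : V}
    (hv : c v = none) (hk : G.degree v < k) : ∃ a, ProperMove G c v a := by
  obtain ⟨o, ho, hfree⟩ := exists_mem_notMem_of_card_lt_card
    (s := (G.neighborFinset v).image c) (t := univ.image some) <| by
      rw [card_image_of_injective _ (Option.some_injective _), card_univ, Fintype.card_fin]
      exact card_image_le.trans_lt hk
  obtain ⟨a, -, rfl⟩ := mem_image.mp ho
  exact ⟨a, hv, fun u hu hua => hfree (mem_image.mpr ⟨u, by simpa using hu, hua⟩)⟩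

theorem aliceWinsColoringGame_of_degree_lt [Fintype V] [DecidableEq V] {k : ℕ}
    (hk : ∀ v, G.degree v < k) : AliceWinsColoringGame false G k :=
  aliceWinsColoringGame_of_invariant (fun _ => True) trivial
    (fun _ _ ⟨v, hv⟩ =>
      let ⟨a, ha⟩ := exists_properMove_of_degree_lt hv (hk v)
      ⟨v, a, ha, nofun⟩)
    (fun _ _ _ _ _ => trivial)

def IsSwapOf (f : G.Coloring (Fin 2)) (c : V → Option (Fin 2)) : Prop :=
  ∃ s : Fin 2, ∀ p a, c p = some a → a = f p + s

lemma isSwapOf_play [DecidableEq V] {f : G.Coloring (Fin 2)} {c : V → Option (Fin 2)} {v : V}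
    {a : Fin 2} (hc : IsSwapOf f c) (hmove : LegalMove true G c v a) :
    IsSwapOf f (play c v a) := by
  obtain ⟨⟨-, hproper⟩, hconn⟩ := hmove
  obtain ⟨s, hs⟩ := hc
  suffices h : ∃ s', a = f v + s' ∧ ∀ p b, c p = some b → b = f p + s' by
    obtain ⟨s', hav, hs'⟩ := h
    refine ⟨s', fun p b hp => ?_⟩
    by_cases hpv : p = v
    · subst hpv
      simp_all [play]
    · exact hs' p b (by simpa [play, hpv] using hp)
  rcases hconn rfl with hnone | ⟨u, hvu, hu⟩
  · exact ⟨a - f v, by abel, fun p b hp => by simp [hnone p] at hp⟩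
  · obtain ⟨b, hb⟩ := Option.isSome_iff_exists.mp hu
    have hab : a ≠ b := fun h => hproper u hvu (h ▸ hb)
    have hvb : f v + s ≠ b := by
      rw [hs u b hb]
      exact fun h => f.valid hvu (add_right_cancel h)
    exact ⟨s, by omega, hs⟩

lemma exists_legalMove_of_isSwapOf (hG : G.Connected) {f : G.Coloring (Fin 2)}
    {c : V → Option (Fin 2)} (hc : IsSwapOf f c) (hv : ∃ v, c v = none) :
    ∃ v a, LegalMove true G c v a := by
  obtain ⟨s, hs⟩ := hc
  have hproper : ∀ v, c v = none → ProperMove G c v (f v + s) := fun v hv =>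
    ⟨hv, fun u hvu hu => f.valid hvu (add_right_cancel (hs u _ hu))⟩
  obtain ⟨v, hv⟩ := hv
  by_cases hnone : ∀ u, c u = none
  · exact ⟨v, _, hproper v hv, fun _ => Or.inl hnone⟩
  push Not at hnone
  obtain ⟨u, hu⟩ := hnone
  obtain ⟨d, -, hd, hd'⟩ := (hG.preconnected u v).some.exists_boundary_dart
    {x | (c x).isSome} (by simpa [Option.isSome_iff_ne_none] using hu) (by simpa using hv)
  exact ⟨d.snd, _, hproper _ (by simpa using hd'), fun _ => Or.inr ⟨d.fst, d.adj.symm, hd⟩⟩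

theorem aliceWinsColoringGame_true_two [Fintype V] [DecidableEq V] (hG : G.Connected)
    (h2 : G.Colorable 2) : AliceWinsColoringGame true G 2 := by
  obtain ⟨f⟩ := h2
  exact aliceWinsColoringGame_of_invariant (IsSwapOf f) ⟨0, fun _ _ h => by simp at h⟩
    (fun _ hc hv => exists_legalMove_of_isSwapOf hG hc hv) (fun _ _ _ => isSwapOf_play)

theorem connGameChromaticNumber_le_two [Fintype V] [DecidableEq V] (hG : G.Connected)
    (h2 : G.Colorable 2) : connGameChromaticNumber G ≤ 2 :=
  Nat.sInf_le (aliceWinsColoringGame_true_two hG h2)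

section Crown

/-- The crown graph `K_{m,m} - M`: `(i, b)` is the `i`-th vertex of side `b`, and the removed
perfect matching consists of the pairs `(i, false)`, `(i, true)`. -/
def crownGraph (m : ℕ) : SimpleGraph (Fin m × Bool) where
  Adj v w := v.1 ≠ w.1 ∧ v.2 ≠ w.2
  symm := ⟨fun _ _ h => ⟨h.1.symm, h.2.symm⟩⟩
  loopless := ⟨fun _ h => h.1 rfl⟩

variable {m : ℕ}

@[simp]
lemma crownGraph_adj {v w : Fin m × Bool} : (crownGraph m).Adj v w ↔ v.1 ≠ w.1 ∧ v.2 ≠ w.2 :=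
  Iff.rfl

theorem crownGraph_colorable_two : (crownGraph m).Colorable 2 :=
  (SimpleGraph.Coloring.mk Prod.snd fun h => (crownGraph_adj.mp h).2).colorable

lemma exists_ne_ne (hm : 3 ≤ m) (i j : Fin m) : ∃ l, l ≠ i ∧ l ≠ j := by
  obtain ⟨l, hl, hlj⟩ := exists_mem_ne (s := univ.erase i) (by simp; omega) j
  exact ⟨l, ne_of_mem_erase hl, hlj⟩

theorem crownGraph_connected (hm : 3 ≤ m) : (crownGraph m).Connected := by
  have hside : ∀ i j b, (crownGraph m).Reachable (i, b) (j, b) := by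
    intro i j b
    obtain ⟨l, hli, hlj⟩ := exists_ne_ne hm i j
    exact (crownGraph_adj (w := (l, !b)) |>.mpr ⟨hli.symm, by simp⟩).reachable.trans
      (crownGraph_adj.mpr ⟨hlj, by simp⟩).reachable
  refine (SimpleGraph.connected_iff_exists_forall_reachable _).mpr ⟨(⟨0, by omega⟩, false), ?_⟩
  rintro ⟨j, b⟩
  cases b
  · exact hside _ _ _
  · obtain ⟨l, hlj, -⟩ := exists_ne_ne hm j j
    exact (hside _ l _).trans (crownGraph_adj.mpr ⟨hlj, by simp⟩).reachable

variable {k : ℕ} {σ : Fin m → Option (Fin k)}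

lemma exists_eq_none_of_injOn (hk : k < m) (hσ : Set.InjOn σ {i | σ i ≠ none}) :
    ∃ i, σ i = none := by
  by_contra! h
  have := card_le_card_of_injOn σ (s := univ) (t := univ.erase none)
    (fun i _ => mem_erase.mpr ⟨h i, mem_univ _⟩) (fun i _ j _ => hσ (h i) (h j))
  simp at this
  omega

lemma injOn_update_of_fresh (hσ : Set.InjOn σ {i | σ i ≠ none}) {a : Fin k}
    (hfresh : ∀ j, σ j ≠ some a) (i : Fin m) :
    Set.InjOn (Function.update σ i (some a)) {j | Function.update σ i (some a) j ≠ none} := by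
  intro x hx y hy hxy
  by_cases hxi : x = i <;> by_cases hyi : y = i
  · rw [hxi, hyi]
  · rw [hxi, Function.update_self, Function.update_of_ne hyi] at hxy
    exact absurd hxy.symm (hfresh y)
  · rw [hyi, Function.update_self, Function.update_of_ne hxi] at hxy
    exact absurd hxy (hfresh x)
  · rw [Function.update_of_ne hxi, Function.update_of_ne hyi] at hxy
    exact hσ (by simpa [hxi] using hx) (by simpa [hyi] using hy) hxy

lemma LegalMove.crownGraph_fresh {v : Fin m × Bool} {a : Fin k}
    (hmove : LegalMove false (crownGraph m) (σ ∘ Prod.fst) v a) :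
    σ v.1 = none ∧ ∀ j, σ j ≠ some a := by
  obtain ⟨⟨hv, hproper⟩, -⟩ := hmove
  refine ⟨hv, fun j hj => hproper (j, !v.2) ⟨fun h => ?_, by simp⟩ hj⟩
  simp_all

lemma LegalMove.crownGraph_partner {v : Fin m × Bool} {a : Fin k}
    (hmove : LegalMove false (crownGraph m) (σ ∘ Prod.fst) v a) :
    LegalMove false (crownGraph m) (play (σ ∘ Prod.fst) v a) (v.1, !v.2) a := by
  obtain ⟨hv, hfresh⟩ := hmove.crownGraph_fresh
  refine ⟨⟨by simp [play, Prod.ext_iff, hv], fun u hu => ?_⟩, nofun⟩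
  have huv : u ≠ v := by rintro rfl; simp at hu
  simpa [play, huv] using hfresh u.1

lemma play_play_partner (v : Fin m × Bool) (a : Fin k) :
    play (play (σ ∘ Prod.fst) v a) (v.1, !v.2) a =
      Function.update σ v.1 (some a) ∘ Prod.fst := by
  ext ⟨i, b⟩ : 1
  by_cases hi : i = v.1
  · subst hi
    cases b <;> cases h : v.2 <;> simp [play, Function.update_apply, Prod.ext_iff, h]
  · simp [play, Prod.ext_iff, hi]

theorem not_aliceWinsFrom_crownGraph (hk : k < m) (n : ℕ) :
    ∀ σ : Fin m → Option (Fin k), Set.InjOn σ {i | σ i ≠ none} →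
      ¬ AliceWinsFrom false (crownGraph m) k n true (σ ∘ Prod.fst) := by
  induction n using Nat.strong_induction_on with
  | _ n ih =>
  intro σ hσ hwin
  obtain ⟨i, hi⟩ := exists_eq_none_of_injOn hk hσ
  have hnotall : ¬ ∀ v : Fin m × Bool, (σ v.1).isSome := fun h => by simpa [hi] using h (i, true)
  match n, hwin with
  | 0, hwin => exact hnotall hwin
  | n + 1, Or.inl hall => exact hnotall hall
  | n + 1, Or.inr ⟨v, a, hmove, hwin⟩ =>
  obtain ⟨hv, hfresh⟩ := hmove.crownGraph_fresh
  have hpartner : ¬ ∀ u, (play (σ ∘ Prod.fst) v a u).isSome := fun h => by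
    simpa [play, Prod.ext_iff, hv] using h (v.1, !v.2)
  match n, hwin with
  | 0, hwin => exact hpartner hwin
  | n + 1, Or.inl hall => exact hpartner hall
  | n + 1, Or.inr ⟨_, hbob⟩ =>
  have hwin := hbob _ _ hmove.crownGraph_partner
  rw [play_play_partner] at hwin
  exact ih n (by omega) _ (injOn_update_of_fresh hσ hfresh v.1) hwin

theorem le_gameChromaticNumber_crownGraph : m ≤ gameChromaticNumber (crownGraph m) := by
  refine le_csInf ⟨_, aliceWinsColoringGame_of_degree_lt (crownGraph m).degree_lt_card_verts⟩
    fun k hwin => ?_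
  by_contra! hk
  exact not_aliceWinsFrom_crownGraph hk _ (fun _ => none) (by simp) hwin

end Crown

end ConnGame

theorem exists_bipartite_game_minus_connGame_ge_general (n : ℕ) :
    ∃ (V : Type) (iF : Fintype V) (iD : DecidableEq V) (G : SimpleGraph V),
      G.Connected ∧ G.Colorable 2 ∧
        n ≤ @ConnGame.gameChromaticNumber V iF iD G -
              @ConnGame.connGameChromaticNumber V iF iD G := by
  have hconn : (ConnGame.crownGraph (n + 3)).Connected :=
    ConnGame.crownGraph_connected (by omega)
  have hbip := ConnGame.crownGraph_colorable_two (m := n + 3)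
  refine ⟨_, inferInstance, inferInstance, _, hconn, hbip, ?_⟩
  have hlower := ConnGame.le_gameChromaticNumber_crownGraph (m := n + 3)
  have hupper := ConnGame.connGameChromaticNumber_le_two hconn hbip
  omega

/-- For every integer `n ≥ 1`, there exists a finite connected bipartite
simple graph `G` with `χ_g(G) − χ_cg(G) ≥ n`. -/
theorem exists_bipartite_game_minus_connGame_ge (n : ℕ) (hn : 1 ≤ n) :
    ∃ (V : Type) (iF : Fintype V) (iD : DecidableEq V) (G : SimpleGraph V),
      G.Connected ∧ G.Colorable 2 ∧
        n ≤ @ConnGame.gameChromaticNumber V iF iD G -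
              @ConnGame.connGameChromaticNumber V iF iD G :=
  exists_bipartite_game_minus_connGame_ge_general n
end
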